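/- Suppose p : S → [0,1] satisfies p(s) = 1 for all s ∈ T and p(s) = ∑_α σ(s)(α)·∑_{s'} P(s,α)(s')·p(s') for all s ∉ T, where σ is a strategy of a finite MDP with transition function P. If additionally q : S → [0,1] satisfies the same constraints with ≥ in place of = (q(s) ≥ 1 on T and q(s) ≥ ∑_α σ(s)(α)·∑_{s'} P(s,α)(s')·q(s') off T), and from every state some state of T is reachable under σ with positive probability within |S| steps, then q(s) ≥ p(s) for all s. -/

import Mathlib

/-!
Let `d = p - q` and let `M` be its maximum. If `M > 0`, the states where `d` attains `M` lie
outside `T`, and there `d` is subharmonic for the Markov chain induced by `σ`; an average of values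
`≤ M` that is `≥ M` forces every successor of a maximiser to be a maximiser. So the maximisers form
a closed class avoiding `T`, from which `T` is reached with probability `0`, contradicting the
reachability hypothesis.
-/

/-- n-step reachability probability of `T` under strategy `σ`. -/
def nreach {S A : Type*} [Fintype S] [Fintype A]
    (P : S → A → S → ℝ) (σ : S → A → ℝ) (T : Set S) [DecidablePred (· ∈ T)] :
    ℕ → S → ℝ
  | 0, s => if s ∈ T then 1 else 0
  | n + 1, s =>
      if s ∈ T then 1
      else ∑ α, σ s α * ∑ s', P s α s' * nreach P σ T n s'

open Finset

theorem eq_of_le_sum_mul_of_le {ι : Type*} [Fintype ι] {w d : ι → ℝ} {M : ℝ}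
    (hw : ∀ i, 0 ≤ w i) (hw1 : ∑ i, w i = 1) (hd : ∀ i, d i ≤ M) (hM : M ≤ ∑ i, w i * d i)
    {i : ι} (hi : w i ≠ 0) : d i = M := by
  have hterm : ∀ j ∈ univ, 0 ≤ w j * (M - d j) := fun j _ =>
    mul_nonneg (hw j) (sub_nonneg.2 (hd j))
  have hsum : ∑ j, w j * (M - d j) = M - ∑ j, w j * d j := by
    simp only [mul_sub, sum_sub_distrib, ← sum_mul, hw1, one_mul]
  have hzero : ∑ j, w j * (M - d j) = 0 :=
    le_antisymm (by linarith) (sum_nonneg hterm)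
  have := (sum_eq_zero_iff_of_nonneg hterm).1 hzero i (mem_univ i)
  rcases mul_eq_zero.1 this with h | h
  · exact absurd h hi
  · linarith

section StepKernel

variable {S A : Type*} [Fintype A] (P : S → A → S → ℝ) (σ : S → A → ℝ)

/-- The transition matrix of the Markov chain obtained by playing `σ` in the MDP `P`. -/
def stepKernel (s s' : S) : ℝ := ∑ α, σ s α * P s α s'

variable {P σ} in
theorem stepKernel_nonneg (hP : ∀ s α s', 0 ≤ P s α s') (hσ : ∀ s α, 0 ≤ σ s α) (s s' : S) :
    0 ≤ stepKernel P σ s s' :=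
  sum_nonneg fun α _ => mul_nonneg (hσ s α) (hP s α s')

variable [Fintype S]

theorem sum_stepKernel_mul (f : S → ℝ) (s : S) :
    ∑ s', stepKernel P σ s s' * f s' = ∑ α, σ s α * ∑ s', P s α s' * f s' := by
  simp only [stepKernel, sum_mul, mul_sum, mul_assoc]
  exact sum_comm

variable {P σ}

theorem sum_stepKernel (hP : ∀ s α, ∑ s', P s α s' = 1) (hσ : ∀ s, ∑ α, σ s α = 1) (s : S) :
    ∑ s', stepKernel P σ s s' = 1 := by
  simpa [hP, hσ] using sum_stepKernel_mul P σ (fun _ => 1) s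

variable {T : Set S} [DecidablePred (· ∈ T)]

theorem nreach_succ_of_not_mem {s : S} (hs : s ∉ T) (n : ℕ) :
    nreach P σ T (n + 1) s = ∑ s', stepKernel P σ s s' * nreach P σ T n s' := by
  rw [sum_stepKernel_mul, nreach, if_neg hs]

theorem nreach_eq_zero_of_closed {C : Set S} (hCT : ∀ s ∈ C, s ∉ T)
    (hC : ∀ s ∈ C, ∀ s', stepKernel P σ s s' ≠ 0 → s' ∈ C) (n : ℕ) :
    ∀ s ∈ C, nreach P σ T n s = 0 := by
  induction n with
  | zero => intro s hs; simp [nreach, hCT s hs]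
  | succ n ih =>
    intro s hs
    rw [nreach_succ_of_not_mem (hCT s hs)]
    refine sum_eq_zero fun s' _ => ?_
    by_cases hK : stepKernel P σ s s' = 0
    · rw [hK, zero_mul]
    · rw [ih s' (hC s hs s' hK), mul_zero]

end StepKernel

theorem superharmonic_dominates_reachability_general {S A : Type*} [Fintype S] [Fintype A]
    (P : S → A → S → ℝ) (σ : S → A → ℝ) (T : Set S) [DecidablePred (· ∈ T)]
    (hP : ∀ s α, (∀ s', 0 ≤ P s α s') ∧ ∑ s', P s α s' = 1)
    (hσ : ∀ s, (∀ α, 0 ≤ σ s α) ∧ ∑ α, σ s α = 1)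
    (p q : S → ℝ)
    (hpT : ∀ s ∈ T, p s = 1)
    (hpE : ∀ s ∉ T, p s = ∑ α, σ s α * ∑ s', P s α s' * p s')
    (hqT : ∀ s ∈ T, 1 ≤ q s)
    (hqE : ∀ s ∉ T, ∑ α, σ s α * ∑ s', P s α s' * q s' ≤ q s)
    (hreach : ∀ s, 0 < nreach P σ T (Fintype.card S) s) :
    ∀ s, p s ≤ q s := by
  by_contra! ⟨s₀, hs₀⟩
  set d : S → ℝ := fun s => p s - q s
  obtain ⟨m, -, hm⟩ := exists_max_image univ d ⟨s₀, mem_univ s₀⟩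
  have hdM : ∀ s, d s ≤ d m := fun s => hm s (mem_univ s)
  have hM : 0 < d m := by linarith [hdM s₀]
  have hCT : ∀ s, d s = d m → s ∉ T := fun s hs hsT => by
    linarith [hpT s hsT, hqT s hsT]
  have hsubharmonic : ∀ s ∉ T, d s ≤ ∑ s', stepKernel P σ s s' * d s' := fun s hs => by
    simp only [d, mul_sub, sum_sub_distrib, sum_stepKernel_mul]
    linarith [hpE s hs, hqE s hs]
  have hclosed : ∀ s, d s = d m → ∀ s', stepKernel P σ s s' ≠ 0 → d s' = d m :=
    fun s hs s' hK => eq_of_le_sum_mul_of_le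
      (stepKernel_nonneg (fun s α => (hP s α).1) (fun s => (hσ s).1) s)
      (sum_stepKernel (fun s α => (hP s α).2) (fun s => (hσ s).2) s)
      hdM (hs ▸ hsubharmonic s (hCT s hs)) hK
  have hzero := nreach_eq_zero_of_closed (C := {s | d s = d m}) hCT hclosed (Fintype.card S) m rfl
  linarith [hreach m]

theorem superharmonic_dominates_reachability {S A : Type*} [Fintype S] [Fintype A]
    (P : S → A → S → ℝ) (σ : S → A → ℝ) (T : Set S) [DecidablePred (· ∈ T)]
    (hP : ∀ s α, (∀ s', 0 ≤ P s α s') ∧ ∑ s', P s α s' = 1)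
    (hσ : ∀ s, (∀ α, 0 ≤ σ s α) ∧ ∑ α, σ s α = 1)
    (p q : S → ℝ)
    (hp01 : ∀ s, 0 ≤ p s ∧ p s ≤ 1) (hq01 : ∀ s, 0 ≤ q s ∧ q s ≤ 1)
    (hpT : ∀ s ∈ T, p s = 1)
    (hpE : ∀ s ∉ T, p s = ∑ α, σ s α * ∑ s', P s α s' * p s')
    (hqT : ∀ s ∈ T, 1 ≤ q s)
    (hqE : ∀ s ∉ T, ∑ α, σ s α * ∑ s', P s α s' * q s' ≤ q s)
    (hreach : ∀ s, 0 < nreach P σ T (Fintype.card S) s) :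
    ∀ s, p s ≤ q s :=
  superharmonic_dominates_reachability_general P σ T hP hσ p q hpT hpE hqT hqE hreach
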